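/- arXiv:2007.14659 — 5 statements merged into one kernel-verified Lean document; each statement's English description precedes it below -/
import Mathlib

section
/- Let X be an integrable real-valued random variable with strictly increasing continuous cumulative distribution function F and density f. Fix α ∈ (0,1) and let θ_α be the α-quantile, i.e. F(θ_α) = α. Define L_α(θ) = θ + (1-α)^{-1} E[(X - θ)·1_{X > θ}]. Then L_α is differentiable with L_α'(θ) = (F(θ) - α)/(1 - α) for all θ ∈ ℝ; in particular L_α'(θ_α) = 0. -/
/-!
`L θ = θ + (1 - α)⁻¹ G(θ)` with `G(θ) = ∫ (x - θ)⁺ dν`, `ν` the law of `X`. The integrand is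
1-Lipschitz in `θ` and differentiable with derivative `-1_{x > θ}` off the single point `x = θ`,
which is `ν`-null because `F = cdf ν` is continuous; differentiating under the integral gives
`G'(θ) = -ν (θ, ∞) = F θ - 1`.
-/

open MeasureTheory ProbabilityTheory Set Filter

lemma measure_singleton_eq_zero_of_continuousAt_cdf {ν : Measure ℝ} [IsProbabilityMeasure ν]
    {θ : ℝ} (h : ContinuousAt (cdf ν) θ) : ν {θ} = 0 := by
  rw [← measure_cdf ν, StieltjesFunction.measure_singleton, h.continuousWithinAt.leftLim_eq,
    sub_self, ENNReal.ofReal_zero]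

lemma lipschitzWith_max_const_sub_zero (x : ℝ) : LipschitzWith 1 fun t : ℝ ↦ max (x - t) 0 :=
  LipschitzWith.of_dist_le_mul fun s t ↦ by
    simpa [Real.dist_eq, abs_sub_comm] using abs_max_sub_max_le_abs (x - s) (x - t) 0

lemma hasDerivAt_max_const_sub_zero {x θ : ℝ} (h : x ≠ θ) :
    HasDerivAt (fun t ↦ max (x - t) 0) ((Ioi θ).indicator (fun _ ↦ -1) x) θ := by
  rcases h.lt_or_gt with hlt | hgt
  · rw [indicator_of_notMem (notMem_Ioi.2 hlt.le)]
    refine (hasDerivAt_const θ (0 : ℝ)).congr_of_eventuallyEq ?_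
    filter_upwards [Ioi_mem_nhds hlt] with t ht
    exact max_eq_right (by linarith [mem_Ioi.1 ht])
  · rw [indicator_of_mem (mem_Ioi.2 hgt)]
    refine ((hasDerivAt_id θ).const_sub x).congr_of_eventuallyEq ?_
    filter_upwards [Iio_mem_nhds hgt] with t ht
    exact max_eq_left (by linarith [mem_Iio.1 ht])

theorem hasDerivAt_integral_max_sub_zero {ν : Measure ℝ} [IsFiniteMeasure ν]
    (hν : Integrable id ν) {θ : ℝ} (hθ : ν {θ} = 0) :
    HasDerivAt (fun t ↦ ∫ x, max (x - t) 0 ∂ν) (-ν.real (Ioi θ)) θ := by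
  have hdiff : ∀ᵐ x ∂ν, HasDerivAt (fun t ↦ max (x - t) 0) ((Ioi θ).indicator (fun _ ↦ -1) x) θ :=
    (measure_eq_zero_iff_ae_notMem.1 hθ).mono fun x hx ↦ hasDerivAt_max_const_sub_zero hx
  have := (hasDerivAt_integral_of_dominated_loc_of_lip (bound := fun _ ↦ 1) univ_mem
    (Eventually.of_forall fun t ↦ (hν.sub (integrable_const t)).pos_part.aestronglyMeasurable)
    (hν.sub (integrable_const θ)).pos_part
    ((measurable_const.indicator measurableSet_Ioi).aestronglyMeasurable)
    (Eventually.of_forall fun x ↦ by simpa using lipschitzWith_max_const_sub_zero x)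
    (integrable_const 1) hdiff).2
  rwa [integral_indicator_const _ measurableSet_Ioi, smul_eq_mul, mul_neg_one] at this

theorem stmt_4_general {Ω : Type*} [MeasureSpace Ω] (μ : Measure Ω) [IsProbabilityMeasure μ]
    (X : Ω → ℝ) (hX : Integrable X μ)
    (F : ℝ → ℝ) (hF : ∀ t : ℝ, F t = (μ {ω | X ω ≤ t}).toReal)
    (hFcont : Continuous F)
    (α : ℝ) (hα : α ∈ Set.Ioo (0 : ℝ) 1)
    (θα : ℝ) (hθα : F θα = α)
    (L : ℝ → ℝ)
    (hL : ∀ θ : ℝ, L θ = θ + (1 - α)⁻¹ * ∫ ω, (if θ < X ω then X ω - θ else 0) ∂μ) :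
    (∀ θ : ℝ, HasDerivAt L ((F θ - α) / (1 - α)) θ) ∧
      HasDerivAt L 0 θα := by
  set ν := μ.map X
  have : IsProbabilityMeasure ν := Measure.isProbabilityMeasure_map hX.aemeasurable
  have hν : Integrable id ν :=
    (integrable_map_measure aestronglyMeasurable_id hX.aemeasurable).2 hX
  have hF_cdf : F = cdf ν := funext fun t ↦ by
    rw [hF, cdf_eq_real, measureReal_def,
      Measure.map_apply_of_aemeasurable hX.aemeasurable measurableSet_Iic]
    rfl
  have hL_law : L = fun θ ↦ θ + (1 - α)⁻¹ * ∫ x, max (x - θ) 0 ∂ν := funext fun θ ↦ by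
    rw [hL, integral_map hX.aemeasurable (by fun_prop)]
    congr 3 with ω
    split_ifs with h
    · exact (max_eq_left (by linarith)).symm
    · exact (max_eq_right (by linarith)).symm
  have hderiv (θ : ℝ) : HasDerivAt L ((F θ - α) / (1 - α)) θ := by
    have hatom : ν {θ} = 0 :=
      measure_singleton_eq_zero_of_continuousAt_cdf (hF_cdf ▸ hFcont.continuousAt)
    rw [hL_law]
    refine ((hasDerivAt_id θ).add
      ((hasDerivAt_integral_max_sub_zero hν hatom).const_mul (1 - α)⁻¹)).congr_deriv ?_
    rw [← compl_Iic, probReal_compl_eq_one_sub measurableSet_Iic, ← cdf_eq_real, ← hF_cdf]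
    field_simp [(sub_pos.2 hα.2).ne']
    ring
  exact ⟨hderiv, by simpa [hθα] using hderiv θα⟩

theorem stmt_4 {Ω : Type*} [MeasureSpace Ω] (μ : Measure Ω) [IsProbabilityMeasure μ]
    (X : Ω → ℝ) (hX : Integrable X μ)
    (F : ℝ → ℝ) (hF : ∀ t : ℝ, F t = (μ {ω | X ω ≤ t}).toReal)
    (hFcont : Continuous F) (hFmono : StrictMono F)
    (f : ℝ → ℝ) (hf : ∀ t : ℝ, HasDerivAt F (f t) t)
    (α : ℝ) (hα : α ∈ Set.Ioo (0 : ℝ) 1)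
    (θα : ℝ) (hθα : F θα = α)
    (L : ℝ → ℝ)
    (hL : ∀ θ : ℝ, L θ = θ + (1 - α)⁻¹ * ∫ ω, (if θ < X ω then X ω - θ else 0) ∂μ) :
    (∀ θ : ℝ, HasDerivAt L ((F θ - α) / (1 - α)) θ) ∧
      HasDerivAt L 0 θα :=
  stmt_4_general μ X hX F hF hFcont α hα θα hθα L hL
end

section
/- Let σ_α²(θ) = (1-α)^{-2} Var(X·1_{X>θ}) and τ_α²(θ) = (1-α)^{-2} Var((X-θ)·1_{X>θ}). Then τ_α²(θ_α) = σ_α²(θ_α) - (α θ_α/(1-α))(2ϑ_α - θ_α). In particular, if θ_α ≥ 0 then τ_α²(θ_α) ≤ σ_α²(θ_α). -/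
/-! With `p = μ {θ < X}`, `A = E[X 1_{X>θ}]` and `Z = 1_{X>θ}`, the shifted tail variable is
`(X - θ) 1_{X>θ} = X 1_{X>θ} - θ Z`, so its variance is
`Var(X 1_{X>θ}) - 2θ Cov(X 1_{X>θ}, Z) + θ² Var Z = Var(X 1_{X>θ}) - θ (1 - p) (2A - θp)`.
At the quantile `p = 1 - α` and, since `X` has no atom at `θ_α`, `A = (1 - α) ϑ_α`; dividing by
`(1 - α)²` gives the identity. For `θ_α ≥ 0` the correction is nonnegative because `ϑ_α ≥ θ_α`. -/

open MeasureTheory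

namespace MeasureTheory

variable {Ω E : Type*} [MeasurableSpace Ω] {μ : Measure Ω}
  [NormedAddCommGroup E] [NormedSpace ℝ E]

lemma integral_ite_eq_setIntegral {p : Ω → Prop} [DecidablePred p] (hp : MeasurableSet {ω | p ω})
    (g : Ω → E) :
    ∫ ω, (if p ω then g ω else 0) ∂μ = ∫ ω in {ω | p ω}, g ω ∂μ := by
  rw [← integral_indicator hp]
  congr 1 with ω
  simp [Set.indicator_apply]

lemma setIntegral_le_eq_setIntegral_lt {X : Ω → ℝ} {θ : ℝ} (hθ : μ {ω | X ω = θ} = 0)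
    (g : Ω → E) :
    ∫ ω in {ω | θ ≤ X ω}, g ω ∂μ = ∫ ω in {ω | θ < X ω}, g ω ∂μ := by
  have htail : {ω | θ ≤ X ω} \ {ω | X ω = θ} = {ω | θ < X ω} := by
    ext ω; simp [lt_iff_le_and_ne, eq_comm]
  exact setIntegral_congr_set (htail ▸ sdiff_null_ae_eq_self hθ).symm

lemma setIntegral_sub_const [IsFiniteMeasure μ] {s : Set Ω} {f : Ω → ℝ}
    (hf : IntegrableOn f s μ) (c : ℝ) :
    ∫ ω in s, (f ω - c) ∂μ = ∫ ω in s, f ω ∂μ - c * μ.real s := by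
  rw [integral_sub hf (integrableOn_const), setIntegral_const, smul_eq_mul, mul_comm]

lemma setIntegral_sub_const_sq [IsFiniteMeasure μ] {s : Set Ω} {f : Ω → ℝ}
    (hf : IntegrableOn f s μ) (hf2 : IntegrableOn (fun ω => f ω ^ 2) s μ) (c : ℝ) :
    ∫ ω in s, (f ω - c) ^ 2 ∂μ
      = ∫ ω in s, f ω ^ 2 ∂μ - 2 * c * ∫ ω in s, f ω ∂μ + c ^ 2 * μ.real s := by
  have hexpand : (fun ω => (f ω - c) ^ 2) = fun ω => f ω ^ 2 - 2 * c * f ω + c ^ 2 := by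
    ext ω; ring
  have hlin : IntegrableOn (fun ω => f ω ^ 2 - 2 * c * f ω) s μ := hf2.sub (hf.const_mul _)
  rw [hexpand, integral_add hlin (integrableOn_const),
    integral_sub hf2 (hf.const_mul _), integral_const_mul, setIntegral_const, smul_eq_mul,
    mul_comm (μ.real s)]

lemma setIntegral_sq_sub_sq_of_sub_const [IsFiniteMeasure μ] {s : Set Ω} {f : Ω → ℝ}
    (hf : IntegrableOn f s μ) (hf2 : IntegrableOn (fun ω => f ω ^ 2) s μ) (c : ℝ) :
    (∫ ω in s, (f ω - c) ^ 2 ∂μ) - (∫ ω in s, (f ω - c) ∂μ) ^ 2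
      = (∫ ω in s, f ω ^ 2 ∂μ) - (∫ ω in s, f ω ∂μ) ^ 2
        - c * (1 - μ.real s) * (2 * ∫ ω in s, f ω ∂μ - c * μ.real s) := by
  rw [setIntegral_sub_const_sq hf hf2, setIntegral_sub_const hf]
  ring

end MeasureTheory

theorem stmt_7 {Ω : Type*} [MeasureSpace Ω] (μ : Measure Ω) [IsProbabilityMeasure μ]
    (X : Ω → ℝ) (hXmeas : Measurable X)
    (hX2 : Integrable (fun ω => X ω ^ 2) μ)
    (α : ℝ) (hα : α ∈ Set.Ioo (0 : ℝ) 1)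
    (θα : ℝ) (hθα : (μ {ω | θα < X ω}).toReal = 1 - α)
    (hcont : μ {ω | X ω = θα} = 0)
    (ϑα : ℝ) (hϑα : ϑα = (1 - α)⁻¹ * ∫ ω, (if θα ≤ X ω then X ω else 0) ∂μ)
    (σ2 τ2 : ℝ → ℝ)
    (hσ2 : ∀ θ : ℝ, σ2 θ = (1 - α)⁻¹ ^ 2 *
      ((∫ ω, (if θ < X ω then X ω else 0) ^ 2 ∂μ) -
        (∫ ω, (if θ < X ω then X ω else 0) ∂μ) ^ 2))
    (hτ2 : ∀ θ : ℝ, τ2 θ = (1 - α)⁻¹ ^ 2 *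
      ((∫ ω, (if θ < X ω then X ω - θ else 0) ^ 2 ∂μ) -
        (∫ ω, (if θ < X ω then X ω - θ else 0) ∂μ) ^ 2)) :
    τ2 θα = σ2 θα - α * θα / (1 - α) * (2 * ϑα - θα) ∧
      (0 ≤ θα → τ2 θα ≤ σ2 θα) := by
  obtain ⟨hα0, hα1⟩ := hα
  have hs : MeasurableSet {ω | θα < X ω} := hXmeas measurableSet_Ioi
  have hps : μ.real {ω | θα < X ω} = 1 - α := hθα
  have hXint : Integrable X μ :=
    ((memLp_two_iff_integrable_sq hXmeas.aestronglyMeasurable).2 hX2).integrable one_le_two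
  have hϑ : ϑα = (1 - α)⁻¹ * ∫ ω in {ω | θα < X ω}, X ω ∂μ := by
    rw [hϑα, integral_ite_eq_setIntegral (p := (θα ≤ X ·)) (hXmeas measurableSet_Ici),
      setIntegral_le_eq_setIntegral_lt hcont]
  have hmain : τ2 θα = σ2 θα - α * θα / (1 - α) * (2 * ϑα - θα) := by
    simp only [hτ2, hσ2, ite_pow, zero_pow two_ne_zero, integral_ite_eq_setIntegral hs,
      setIntegral_sq_sub_sq_of_sub_const hXint.integrableOn hX2.integrableOn, hps, hϑ]
    field_simp
    ring
  refine ⟨hmain, fun hθ => ?_⟩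
  have hθϑ : θα ≤ ϑα := by
    rw [hϑ, inv_mul_eq_div, le_div_iff₀ (by linarith), ← hps]
    exact setIntegral_ge_of_const_le_real hs (measure_ne_top μ _) (fun _ h => h.le)
      hXint.integrableOn
  have hcorr : 0 ≤ α * θα / (1 - α) * (2 * ϑα - θα) :=
    mul_nonneg (div_nonneg (mul_nonneg hα0.le hθ) (by linarith)) (by linarith)
  linarith
end

section
/- Let (b_n) ⊂ (0,1) with Σ b_n = ∞ and Σ b_n² < ∞, P_n = ∏_{k=1}^n (1-b_k)^{-1}, and let (ε_n) be a martingale difference sequence with sup_n E[ε_{n+1}²|F_n] < ∞ a.s. Then (1/P_n) Σ_{k=1}^n b_k P_k ε_{k+1} → 0 almost surely. -/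
/-!
The series `∑ b_k ε_{k+1}` is a martingale whose increments are orthogonal in `L²`, so its second
moments are bounded by `C ∑ b_k²`; being `L¹`-bounded, it converges almost surely. Since
`(1 - b)⁻¹ ≥ exp b`, the weights `P_n ≥ exp (∑_{k ≤ n} b_k)` increase to infinity, and Kronecker's
lemma (Abel summation against the weights `P_k`) turns the convergence of `∑ b_k ε_{k+1}` into
`(1 / P_n) ∑_{k ≤ n} b_k P_k ε_{k+1} → 0`.
-/

open MeasureTheory Filter Finset Asymptotics
open scoped Topology

lemma sum_range_succ_mul_sub (P T : ℕ → ℝ) (n : ℕ) :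
    ∑ k ∈ range (n + 1), P k * (T (k + 1) - T k) =
      P n * T (n + 1) - P 0 * T 0 - ∑ k ∈ range n, (P (k + 1) - P k) * T (k + 1) := by
  induction n with
  | zero => simp; ring
  | succ n ih => rw [sum_range_succ, ih, sum_range_succ]; ring

lemma isLittleO_mul_of_tendsto_zero {α : Type*} {l : Filter α} {f g : α → ℝ}
    (hf : Tendsto f l (𝓝 0)) : (fun n => g n * f n) =o[l] g := by
  simpa [mul_comm] using ((isLittleO_one_iff ℝ).2 hf).mul_isBigO (isBigO_refl g l)

/-- Kronecker's lemma. -/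
theorem tendsto_sum_range_succ_mul_div_of_tendsto_sum {P x : ℕ → ℝ} {c : ℝ}
    (hP : Monotone P) (hPtop : Tendsto P atTop atTop)
    (hx : Tendsto (fun n => ∑ k ∈ range n, x k) atTop (𝓝 c)) :
    Tendsto (fun n => (∑ k ∈ range (n + 1), P k * x k) / P n) atTop (𝓝 0) := by
  set T : ℕ → ℝ := fun n => ∑ k ∈ range n, x k - c
  have hT : Tendsto (fun n => T (n + 1)) atTop (𝓝 0) :=
    (tendsto_add_atTop_iff_nat 1).2 (by simpa using hx.sub_const c)
  have habel : ∀ n, ∑ k ∈ range (n + 1), P k * x k =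
      P n * T (n + 1) - P 0 * T 0 - ∑ k ∈ range n, (P (k + 1) - P k) * T (k + 1) := fun n => by
    rw [← sum_range_succ_mul_sub]
    simp [T, sum_range_succ]
  have hconst (a : ℝ) : (fun _ => a) =o[atTop] P :=
    isLittleO_const_left.2 (Or.inr (tendsto_norm_atTop_atTop.comp hPtop))
  have hwsum : ∀ n, ∑ k ∈ range n, (P (k + 1) - P k) = P n - P 0 := sum_range_sub P
  have hmid : (fun n => ∑ k ∈ range n, (P (k + 1) - P k) * T (k + 1)) =o[atTop] P := by
    refine ((isLittleO_mul_of_tendsto_zero hT).sum_range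
      (fun k => sub_nonneg.2 (hP k.le_succ)) ?_).trans_isBigO ?_
    · simp_rw [hwsum]
      exact tendsto_atTop_add_const_right _ (-P 0) hPtop
    · simpa [hwsum] using (isBigO_refl P atTop).sub (hconst (P 0)).isBigO
  simp_rw [habel]
  exact (((isLittleO_mul_of_tendsto_zero hT).sub (hconst _)).sub hmid).tendsto_div_nhds_zero

lemma sum_range_succ_eq_add_sum_Icc (f : ℕ → ℝ) (n : ℕ) :
    ∑ k ∈ range (n + 1), f k = f 0 + ∑ k ∈ Icc 1 n, f k :=
  sum_range_eq_add_Ico f n.succ_pos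

section InvOneSubProd

variable {b : ℕ → ℝ}

lemma monotone_prod_Icc_inv_one_sub (hb0 : ∀ n, 0 ≤ b n) (hb1 : ∀ n, b n < 1) :
    Monotone fun n => ∏ k ∈ Icc 1 n, (1 - b k)⁻¹ := by
  refine monotone_nat_of_le_succ fun n => ?_
  rw [prod_Icc_succ_top (by omega)]
  refine le_mul_of_one_le_right (prod_nonneg fun k _ => ?_) ?_
  · exact inv_nonneg.2 (sub_nonneg.2 (hb1 k).le)
  · exact (one_le_inv₀ (sub_pos.2 (hb1 _))).2 (by linarith [hb0 (n + 1)])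

lemma tendsto_prod_Icc_inv_one_sub_atTop (hb0 : ∀ n, 0 ≤ b n) (hb1 : ∀ n, b n < 1)
    (hdiv : ¬ Summable b) :
    Tendsto (fun n => ∏ k ∈ Icc 1 n, (1 - b k)⁻¹) atTop atTop := by
  have hexp : ∀ n, Real.exp (∑ k ∈ Icc 1 n, b k) ≤ ∏ k ∈ Icc 1 n, (1 - b k)⁻¹ := fun n => by
    rw [Real.exp_sum]
    refine prod_le_prod (fun k _ => (Real.exp_pos _).le) fun k _ => ?_
    rw [le_inv_comm₀ (Real.exp_pos _) (sub_pos.2 (hb1 k)), ← Real.exp_neg]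
    exact Real.one_sub_le_exp_neg _
  have hsum : Tendsto (fun n => ∑ k ∈ Icc 1 n, b k) atTop atTop := by
    have := (tendsto_add_atTop_iff_nat 1).2
      ((not_summable_iff_tendsto_nat_atTop_of_nonneg hb0).1 hdiv)
    simp_rw [sum_range_succ_eq_add_sum_Icc] at this
    simpa using tendsto_atTop_add_const_left _ (-b 0) this
  exact tendsto_atTop_mono hexp (Real.tendsto_exp_atTop.comp hsum)

end InvOneSubProd

section Conditional

variable {Ω : Type*} {m m₀ : MeasurableSpace Ω} {μ : Measure Ω}

lemma integral_mul_eq_zero_of_condExp_eq_zero (hm : m ≤ m₀) [SigmaFinite (μ.trim hm)]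
    {X Y : Ω → ℝ} (hX : StronglyMeasurable[m] X) (hXY : Integrable (X * Y) μ)
    (hY : Integrable Y μ) (hY0 : μ[Y | m] =ᵐ[μ] 0) :
    ∫ ω, X ω * Y ω ∂μ = 0 := by
  change ∫ ω, (X * Y) ω ∂μ = 0
  rw [← integral_condExp hm]
  refine integral_eq_zero_of_ae ?_
  filter_upwards [condExp_mul_of_stronglyMeasurable_left hX hXY hY, hY0] with ω h h0
  simp [h, h0]

lemma integral_le_of_ae_condExp_le [IsProbabilityMeasure μ] (hm : m ≤ m₀) {f : Ω → ℝ} {C : ℝ}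
    (hf : ∀ᵐ ω ∂μ, μ[f | m] ω ≤ C) :
    ∫ ω, f ω ∂μ ≤ C := by
  rw [← integral_condExp hm]
  simpa using integral_mono_ae integrable_condExp (integrable_const C) hf

lemma eLpNorm_one_le_of_integral_sq_le [IsProbabilityMeasure μ] {f : Ω → ℝ} (hf : MemLp f 2 μ)
    {V : ℝ} (hV : ∫ ω, f ω ^ 2 ∂μ ≤ V) :
    eLpNorm f 1 μ ≤ ENNReal.ofReal (1 + V) := by
  have hf1 : Integrable f μ := hf.integrable one_le_two
  rw [eLpNorm_one_eq_lintegral_enorm, ← ofReal_integral_norm_eq_lintegral_enorm hf1]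
  refine ENNReal.ofReal_le_ofReal ?_
  calc ∫ ω, ‖f ω‖ ∂μ ≤ ∫ ω, 1 + f ω ^ 2 ∂μ :=
        integral_mono hf1.norm ((integrable_const 1).add hf.integrable_sq) fun ω => by
          rw [Real.norm_eq_abs, ← sq_abs]
          nlinarith [abs_nonneg (f ω), sq_nonneg (|f ω| - 1)]
    _ ≤ 1 + V := by
        rw [integral_add (integrable_const 1) hf.integrable_sq]
        simpa using hV

end Conditional

section WeightedSum

variable {Ω : Type*} {m₀ : MeasurableSpace Ω} {μ : Measure Ω} {ℱ : Filtration ℕ m₀}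
  {ε : ℕ → Ω → ℝ} (a : ℕ → ℝ)

def weightedSum (ε : ℕ → Ω → ℝ) (n : ℕ) (ω : Ω) : ℝ :=
  ∑ k ∈ range n, a k * ε (k + 1) ω

lemma weightedSum_succ (ε : ℕ → Ω → ℝ) (n : ℕ) :
    weightedSum a ε (n + 1) = weightedSum a ε n + a n • ε (n + 1) := by
  funext ω
  simp [weightedSum, sum_range_succ]

lemma stronglyAdapted_weightedSum (hadapted : ∀ n, StronglyMeasurable[ℱ (n + 1)] (ε (n + 1))) :
    StronglyAdapted ℱ (weightedSum a ε) := fun _ =>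
  Finset.stronglyMeasurable_fun_sum _ fun k hk =>
    stronglyMeasurable_const.mul ((hadapted k).mono (ℱ.mono (mem_range.1 hk)))

lemma memLp_weightedSum (hL2 : ∀ n, MemLp (ε (n + 1)) 2 μ) (n : ℕ) :
    MemLp (weightedSum a ε n) 2 μ :=
  memLp_finsetSum _ fun k _ => (hL2 k).const_mul (a k)

lemma martingale_weightedSum [IsFiniteMeasure μ]
    (hadapted : ∀ n, StronglyMeasurable[ℱ (n + 1)] (ε (n + 1)))
    (hint : ∀ n, Integrable (ε (n + 1)) μ) (hmds : ∀ n, μ[ε (n + 1) | ℱ n] =ᵐ[μ] 0) :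
    Martingale (weightedSum a ε) ℱ μ := by
  refine martingale_of_condExp_sub_eq_zero_nat (stronglyAdapted_weightedSum a hadapted)
    (fun n => integrable_finsetSum _ fun k _ => (hint k).const_mul (a k)) fun n => ?_
  rw [weightedSum_succ, add_sub_cancel_left]
  filter_upwards [condExp_smul (a n) (ε (n + 1)) (ℱ n), hmds n] with ω h h0
  simp [h, h0]

lemma integral_weightedSum_sq [IsFiniteMeasure μ]
    (hadapted : ∀ n, StronglyMeasurable[ℱ (n + 1)] (ε (n + 1)))
    (hL2 : ∀ n, MemLp (ε (n + 1)) 2 μ) (hmds : ∀ n, μ[ε (n + 1) | ℱ n] =ᵐ[μ] 0) (n : ℕ) :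
    ∫ ω, weightedSum a ε n ω ^ 2 ∂μ = ∑ k ∈ range n, a k ^ 2 * ∫ ω, ε (k + 1) ω ^ 2 ∂μ := by
  induction n with
  | zero => simp [weightedSum]
  | succ n ih =>
    set M := weightedSum a ε n
    have hM := memLp_weightedSum a hL2 n
    have hcross : ∫ ω, M ω * ε (n + 1) ω ∂μ = 0 :=
      integral_mul_eq_zero_of_condExp_eq_zero (ℱ.le n) (stronglyAdapted_weightedSum a hadapted n)
        (hM.integrable_mul (hL2 n)) ((hL2 n).integrable one_le_two) (hmds n)
    have hexpand : ∀ ω, weightedSum a ε (n + 1) ω ^ 2 =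
        M ω ^ 2 + 2 * a n * (M ω * ε (n + 1) ω) + a n ^ 2 * ε (n + 1) ω ^ 2 := fun ω => by
      rw [weightedSum_succ]
      simp only [Pi.add_apply, Pi.smul_apply, smul_eq_mul]
      ring
    have hsq : Integrable (fun ω => M ω ^ 2) μ := hM.integrable_sq
    have hmul : Integrable (fun ω => 2 * a n * (M ω * ε (n + 1) ω)) μ :=
      (hM.integrable_mul (hL2 n)).const_mul _
    have hlast : Integrable (fun ω => a n ^ 2 * ε (n + 1) ω ^ 2) μ :=
      (hL2 n).integrable_sq.const_mul _
    have hsum : Integrable (fun ω => M ω ^ 2 + 2 * a n * (M ω * ε (n + 1) ω)) μ :=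
      hsq.add hmul
    simp_rw [hexpand]
    rw [integral_add hsum hlast, integral_add hsq hmul, integral_const_mul,
      integral_const_mul, hcross, ih, sum_range_succ]
    ring

lemma ae_tendsto_weightedSum [IsProbabilityMeasure μ]
    (hadapted : ∀ n, StronglyMeasurable[ℱ (n + 1)] (ε (n + 1)))
    (hL2 : ∀ n, MemLp (ε (n + 1)) 2 μ) (hmds : ∀ n, μ[ε (n + 1) | ℱ n] =ᵐ[μ] 0) {C : ℝ}
    (hC : ∀ n, ∀ᵐ ω ∂μ, μ[fun ω => ε (n + 1) ω ^ 2 | ℱ n] ω ≤ C)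
    (ha : Summable fun n => a n ^ 2) :
    ∀ᵐ ω ∂μ, ∃ c, Tendsto (fun n => weightedSum a ε n ω) atTop (𝓝 c) := by
  have hE : ∀ n, ∫ ω, ε (n + 1) ω ^ 2 ∂μ ≤ C := fun n =>
    integral_le_of_ae_condExp_le (ℱ.le n) (hC n)
  have hC0 : 0 ≤ C := (integral_nonneg fun ω => sq_nonneg _).trans (hE 0)
  have hbound : ∀ n, ∫ ω, weightedSum a ε n ω ^ 2 ∂μ ≤ ∑' k, a k ^ 2 * C := fun n => by
    rw [integral_weightedSum_sq a hadapted hL2 hmds]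
    calc ∑ k ∈ range n, a k ^ 2 * ∫ ω, ε (k + 1) ω ^ 2 ∂μ
        ≤ ∑ k ∈ range n, a k ^ 2 * C :=
          sum_le_sum fun k _ => mul_le_mul_of_nonneg_left (hE k) (sq_nonneg _)
      _ ≤ ∑' k, a k ^ 2 * C :=
          Summable.sum_le_tsum _ (fun k _ => mul_nonneg (sq_nonneg _) hC0) (ha.mul_right C)
  exact (martingale_weightedSum a hadapted (fun n => (hL2 n).integrable one_le_two)
    hmds).submartingale.exists_ae_tendsto_of_bdd (R := (1 + ∑' k, a k ^ 2 * C).toNNReal)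
    fun n => eLpNorm_one_le_of_integral_sq_le (memLp_weightedSum a hL2 n) (hbound n)

end WeightedSum

theorem stmt_12 {Ω : Type*} {m : MeasurableSpace Ω} (μ : Measure Ω)
    [IsProbabilityMeasure μ] (ℱ : Filtration ℕ m)
    (ε : ℕ → Ω → ℝ)
    (hadapted : ∀ n : ℕ, StronglyMeasurable[ℱ (n + 1)] (ε (n + 1)))
    (hint : ∀ n : ℕ, Integrable (ε n) μ)
    (hint2 : ∀ n : ℕ, Integrable (fun ω => (ε n ω) ^ 2) μ)
    (hmds : ∀ n : ℕ, μ[ε (n + 1) | ℱ n] =ᵐ[μ] 0)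
    (C : ℝ)
    (hC : ∀ n : ℕ, ∀ᵐ ω ∂μ, (μ[fun ω' => (ε (n + 1) ω') ^ 2 | ℱ n]) ω ≤ C)
    (b : ℕ → ℝ) (hb : ∀ n, 0 < b n ∧ b n < 1)
    (hdiv : ¬ Summable b) (hsq : Summable (fun n => b n ^ 2))
    (P : ℕ → ℝ) (hP : ∀ n, P n = ∏ k ∈ Finset.Icc 1 n, (1 - b k)⁻¹) :
    ∀ᵐ ω ∂μ,
      Tendsto (fun n : ℕ => (1 / P n) * ∑ k ∈ Finset.Icc 1 n, b k * P k * ε (k + 1) ω)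
        atTop (nhds 0) := by
  have hL2 : ∀ n, MemLp (ε (n + 1)) 2 μ := fun n =>
    (memLp_two_iff_integrable_sq (hint (n + 1)).aestronglyMeasurable).2 (hint2 (n + 1))
  have hb0 : ∀ n, 0 ≤ b n := fun n => (hb n).1.le
  have hb1 : ∀ n, b n < 1 := fun n => (hb n).2
  have hPeq : P = fun n => ∏ k ∈ Icc 1 n, (1 - b k)⁻¹ := funext hP
  have hPmono : Monotone P := hPeq ▸ monotone_prod_Icc_inv_one_sub hb0 hb1
  have hPtop : Tendsto P atTop atTop := hPeq ▸ tendsto_prod_Icc_inv_one_sub_atTop hb0 hb1 hdiv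
  filter_upwards [ae_tendsto_weightedSum b hadapted hL2 hmds hC hsq] with ω ⟨c, hc⟩
  have hK := tendsto_sum_range_succ_mul_div_of_tendsto_sum (x := fun k => b k * ε (k + 1) ω)
    hPmono hPtop hc
  have h0 : Tendsto (fun n => P 0 * (b 0 * ε 1 ω) / P n) atTop (𝓝 0) :=
    tendsto_const_nhds.div_atTop hPtop
  refine (sub_zero (0 : ℝ) ▸ hK.sub h0).congr fun n => ?_
  have hterm : ∑ k ∈ Icc 1 n, P k * (b k * ε (k + 1) ω) =
      ∑ k ∈ Icc 1 n, b k * P k * ε (k + 1) ω :=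
    sum_congr rfl fun k _ => by ring
  rw [sum_range_succ_eq_add_sum_Icc, hterm]
  ring
end

section
/- Let b₁ ∈ (1/2, 1), b_n = b₁/n, P_n = ∏_{k=1}^n (1 - b_k)^{-1}. Then lim_{n→∞} (1/n^{2b₁-1}) Σ_{k=1}^n b_k² P_k² = (b₁²/(2b₁-1)) Γ(1-b₁)². -/
/-!
Since `(1 - b₁ / k)⁻¹ = k / (k - b₁)`, the partial product `P n` is `n! / ∏_{j<n} (1 - b₁ + j)`,
which is Euler's sequence `GammaSeq (1 - b₁) n` up to the factor `(1 - b₁ + n) / n → 1`; hence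
`P n ~ Γ(1 - b₁) n ^ b₁` and `b k ^ 2 * P k ^ 2 ~ b₁² Γ(1 - b₁)² k ^ (p - 1)`,
where `p = 2 b₁ - 1 > 0`.
The increments `(k + 1) ^ p - k ^ p ~ p k ^ (p - 1)` telescope to `n ^ p`, so Stolz–Cesàro gives
`∑_{k ≤ n} b k ^ 2 * P k ^ 2 ~ b₁² Γ(1 - b₁)² n ^ p / p`.
-/

open Filter Finset Topology
open scoped Nat

theorem prod_Icc_inv_one_sub_div (a : ℝ) (n : ℕ) :
    ∏ k ∈ Icc 1 n, (1 - a / k)⁻¹ = n ! / ∏ j ∈ range n, (1 - a + j) := by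
  have hfactor (j : ℕ) : (1 - a / ((j + 1 : ℕ) : ℝ))⁻¹ = (j + 1) / (1 - a + j) := by
    push_cast
    rw [one_sub_div (by positivity), inv_div]
    ring
  rw [← Ico_add_one_right_eq_Icc, prod_Ico_eq_prod_range, Nat.add_sub_cancel]
  simp only [add_comm 1, hfactor, prod_div_distrib,
    ← prod_range_add_one_eq_factorial, Nat.cast_prod]
  push_cast
  rfl

theorem prod_Icc_inv_one_sub_div_div_rpow_eq (a : ℝ) {n : ℕ} (hn : 0 < n)
    (ha : 1 - a + (n : ℝ) ≠ 0) :
    (∏ k ∈ Icc 1 n, (1 - a / k)⁻¹) / (n : ℝ) ^ a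
      = Real.GammaSeq (1 - a) n * ((1 - a + (n : ℝ)) / n) := by
  have hn' : (0 : ℝ) < n := by exact_mod_cast hn
  have hna : (n : ℝ) ^ a ≠ 0 := (Real.rpow_pos_of_pos hn' a).ne'
  rw [prod_Icc_inv_one_sub_div, Real.GammaSeq, prod_range_succ, Real.rpow_sub hn', Real.rpow_one]
  by_cases hQ : ∏ j ∈ range n, (1 - a + (j : ℝ)) = 0
  · simp [hQ]
  · field_simp

theorem tendsto_prod_Icc_inv_one_sub_div_div_rpow (a : ℝ) :
    Tendsto (fun n : ℕ => (∏ k ∈ Icc 1 n, (1 - a / k)⁻¹) / (n : ℝ) ^ a) atTop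
      (𝓝 (Real.Gamma (1 - a))) := by
  have hratio : Tendsto (fun n : ℕ => (1 - a + (n : ℝ)) / n) atTop (𝓝 1) := by
    simpa [inv_div, add_comm] using (tendsto_natCast_div_add_atTop (1 - a)).inv₀ one_ne_zero
  have heq : ∀ᶠ n : ℕ in atTop, Real.GammaSeq (1 - a) n * ((1 - a + (n : ℝ)) / n)
      = (∏ k ∈ Icc 1 n, (1 - a / k)⁻¹) / (n : ℝ) ^ a := by
    filter_upwards [eventually_gt_atTop 0,
      tendsto_natCast_atTop_atTop.eventually_gt_atTop (a - 1)] with n hn ha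
    exact (prod_Icc_inv_one_sub_div_div_rpow_eq a hn (by linarith)).symm
  simpa using ((Real.GammaSeq_tendsto_Gamma (1 - a)).mul hratio).congr' heq

theorem tendsto_rpow_add_one_sub_rpow_div_rpow (p : ℝ) :
    Tendsto (fun k : ℕ => (((k : ℝ) + 1) ^ p - (k : ℝ) ^ p) / ((k : ℝ) + 1) ^ (p - 1)) atTop
      (𝓝 p) := by
  have hderiv : Tendsto (slope (fun x : ℝ => x ^ p) 1) (𝓝[≠] 1) (𝓝 p) := by
    simpa using hasDerivAt_iff_tendsto_slope.mp
      (Real.hasDerivAt_rpow_const (x := 1) (p := p) (Or.inl one_ne_zero))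
  have hx : Tendsto (fun k : ℕ => (k : ℝ) / (k + 1)) atTop (𝓝[≠] 1) :=
    tendsto_nhdsWithin_iff.2 ⟨tendsto_natCast_div_add_atTop 1,
      Eventually.of_forall fun k => ((div_lt_one (by positivity)).2 (lt_add_one _)).ne⟩
  -- the slope of `x ↦ x ^ p` between `k / (k + 1)` and `1`
  refine (hderiv.comp hx).congr fun k => ?_
  have hK : (0 : ℝ) < k + 1 := by positivity
  have hKp : ((k : ℝ) + 1) ^ p ≠ 0 := (Real.rpow_pos_of_pos hK p).ne'
  simp only [Function.comp_apply, slope_def_field, Real.one_rpow,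
    Real.div_rpow (Nat.cast_nonneg k) hK.le, Real.rpow_sub hK, Real.rpow_one]
  field_simp
  ring

theorem tendsto_sum_range_div_sum_range_of_tendsto_div {u g : ℕ → ℝ} {L : ℝ}
    (hg : ∀ k, 0 < g k) (hsum : Tendsto (fun n => ∑ k ∈ range n, g k) atTop atTop)
    (h : Tendsto (fun k => u k / g k) atTop (𝓝 L)) :
    Tendsto (fun n => (∑ k ∈ range n, u k) / ∑ k ∈ range n, g k) atTop (𝓝 L) := by
  have hlo : (fun k => u k - L * g k) =o[atTop] g := by
    rw [Asymptotics.isLittleO_iff_tendsto fun k hk => absurd hk (hg k).ne']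
    refine (tendsto_sub_nhds_zero_iff.2 h).congr fun k => ?_
    field_simp [(hg k).ne']
  have hdiv := (hlo.sum_range (fun k => (hg k).le) hsum).tendsto_div_nhds_zero.add_const L
  rw [zero_add] at hdiv
  refine hdiv.congr' ?_
  filter_upwards [hsum.eventually_gt_atTop 0] with n hn
  rw [sum_sub_distrib, ← mul_sum]
  field_simp
  ring

theorem tendsto_sum_range_div_rpow {u : ℕ → ℝ} {p c : ℝ} (hp : 0 < p)
    (hu : Tendsto (fun k : ℕ => u k / ((k : ℝ) + 1) ^ (p - 1)) atTop (𝓝 c)) :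
    Tendsto (fun n : ℕ => (∑ k ∈ range n, u k) / (n : ℝ) ^ p) atTop (𝓝 (c / p)) := by
  set g : ℕ → ℝ := fun k => ((k : ℝ) + 1) ^ p - (k : ℝ) ^ p
  have hg (k : ℕ) : 0 < g k :=
    sub_pos.2 (Real.rpow_lt_rpow (Nat.cast_nonneg k) (lt_add_one _) hp)
  have hsum (n : ℕ) : ∑ k ∈ range n, g k = (n : ℝ) ^ p := by
    simpa [g, Real.zero_rpow hp.ne'] using sum_range_sub (fun k : ℕ => (k : ℝ) ^ p) n
  have hlim : Tendsto (fun k => u k / g k) atTop (𝓝 (c / p)) :=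
    (hu.div (tendsto_rpow_add_one_sub_rpow_div_rpow p) hp.ne').congr fun k =>
      div_div_div_cancel_right₀ (Real.rpow_pos_of_pos (by positivity) _).ne' _ _
  have hsum_top : Tendsto (fun n => ∑ k ∈ range n, g k) atTop atTop := by
    simpa only [hsum, Function.comp_def] using
      (tendsto_rpow_atTop hp).comp tendsto_natCast_atTop_atTop
  simpa only [hsum] using tendsto_sum_range_div_sum_range_of_tendsto_div hg hsum_top hlim

theorem stmt_14_general (b₁ : ℝ) (hb : 1 / 2 < b₁)
    (b : ℕ → ℝ) (hbn : ∀ n : ℕ, 1 ≤ n → b n = b₁ / n)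
    (P : ℕ → ℝ) (hP : ∀ n, P n = ∏ k ∈ Finset.Icc 1 n, (1 - b k)⁻¹) :
    Tendsto (fun n : ℕ =>
      (1 / (n : ℝ) ^ (2 * b₁ - 1)) * ∑ k ∈ Finset.Icc 1 n, (b k) ^ 2 * (P k) ^ 2)
      atTop (nhds (b₁ ^ 2 / (2 * b₁ - 1) * Real.Gamma (1 - b₁) ^ 2)) := by
  have hP' (n : ℕ) : P n = ∏ k ∈ Icc 1 n, (1 - b₁ / k)⁻¹ :=
    (hP n).trans (prod_congr rfl fun k hk => by rw [hbn k (mem_Icc.1 hk).1])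
  have hΓ : Tendsto (fun n : ℕ => P n / (n : ℝ) ^ b₁) atTop (𝓝 (Real.Gamma (1 - b₁))) := by
    simpa only [hP'] using tendsto_prod_Icc_inv_one_sub_div_div_rpow b₁
  have hu : Tendsto
      (fun k : ℕ => b (k + 1) ^ 2 * P (k + 1) ^ 2 / ((k : ℝ) + 1) ^ (2 * b₁ - 1 - 1)) atTop
      (𝓝 (b₁ ^ 2 * Real.Gamma (1 - b₁) ^ 2)) := by
    refine (((hΓ.comp (tendsto_add_atTop_nat 1)).pow 2).const_mul (b₁ ^ 2)).congr fun k => ?_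
    have hK : (0 : ℝ) < k + 1 := by positivity
    rw [Function.comp_apply, hbn (k + 1) (by omega), show 2 * b₁ - 1 - 1 = b₁ * 2 - 2 by ring,
      Real.rpow_sub hK, Real.rpow_mul hK.le, Real.rpow_two, Real.rpow_two]
    have : ((k : ℝ) + 1) ^ b₁ ≠ 0 := (Real.rpow_pos_of_pos hK _).ne'
    push_cast
    field_simp
  convert tendsto_sum_range_div_rpow (by linarith) hu using 2 with n
  · rw [← Ico_add_one_right_eq_Icc, sum_Ico_eq_sum_range, Nat.add_sub_cancel, one_div_mul_eq_div]
    simp only [add_comm 1]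
  · ring

theorem stmt_14 (b₁ : ℝ) (hb : 1 / 2 < b₁) (hb' : b₁ < 1)
    (b : ℕ → ℝ) (hbn : ∀ n : ℕ, 1 ≤ n → b n = b₁ / n)
    (P : ℕ → ℝ) (hP : ∀ n, P n = ∏ k ∈ Finset.Icc 1 n, (1 - b k)⁻¹) :
    Tendsto (fun n : ℕ =>
      (1 / (n : ℝ) ^ (2 * b₁ - 1)) * ∑ k ∈ Finset.Icc 1 n, (b k) ^ 2 * (P k) ^ 2)
      atTop (nhds (b₁ ^ 2 / (2 * b₁ - 1) * Real.Gamma (1 - b₁) ^ 2)) :=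
  stmt_14_general b₁ hb b hbn P hP
end

section
/- Let 1/2 < b < 1 and b₁ ∈ (0,1), b_n = b₁/n^b, P_n = ∏_{k=1}^n (1-b_k)^{-1}. Then lim_{n→∞} (1/(b_n P_n²)) Σ_{k=1}^n b_k² P_k² = 1/2. -/
/-!
Write `w n = b n * P n ^ 2`. The recursion `P n = P (n + 1) * (1 - b (n + 1))` gives
`w (n + 1) - w n = b n * b (n + 1) * P (n + 1) ^ 2 * (2 - b (n + 1) - (1 / b (n + 1) - 1 / b n))`,
so the increments `b (n + 1) ^ 2 * P (n + 1) ^ 2` of the sum, divided by those of `w`, tend to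
`1 / 2` as soon as `b n → 0` and `1 / b (n + 1) - 1 / b n → 0`; for `b n = b₁ / n ^ b` the latter is
`((n + 1) ^ b - n ^ b) / b₁ → 0` since `b < 1`. Moreover `P n ≥ exp (∑ k ≤ n, b k) ≥ exp (b₁ n ^ (1 - b))`,
so `w n → ∞`, and the Stolz–Cesàro theorem gives the limit.
-/

open Filter Asymptotics Finset Topology Real

theorem StrictMono.tendsto_div_of_tendsto_sub_div_sub {A B : ℕ → ℝ} {l : ℝ}
    (hBm : StrictMono B) (hB : Tendsto B atTop atTop)
    (h : Tendsto (fun n => (A (n + 1) - A n) / (B (n + 1) - B n)) atTop (𝓝 l)) :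
    Tendsto (fun n => A n / B n) atTop (𝓝 l) := by
  -- The increments of `A - l • B` are `o` of those of `B`; summing them keeps this relation.
  have hd : ∀ n, 0 < B (n + 1) - B n := fun n => sub_pos.2 (hBm n.lt_succ_self)
  have he : (fun n => A (n + 1) - A n - l * (B (n + 1) - B n)) =o[atTop]
      fun n => B (n + 1) - B n := by
    rw [isLittleO_iff_tendsto' (.of_forall fun n h => absurd h (hd n).ne')]
    refine (sub_self l ▸ h.sub_const l).congr fun n => ?_
    field_simp [(hd n).ne']
  have hsum_eq : ∀ n, ∑ k ∈ range n, (A (k + 1) - A k - l * (B (k + 1) - B k)) =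
      A n - A 0 - l * (B n - B 0) := fun n => by
    rw [sum_sub_distrib, ← mul_sum, sum_range_sub, sum_range_sub]
  have hsum := he.sum_range (fun n => (hd n).le) <|
    (tendsto_atTop_add_const_right _ (-B 0) hB).congr fun n => by rw [sum_range_sub]; ring
  simp only [hsum_eq, sum_range_sub] at hsum
  have hconst : ∀ c : ℝ, (fun _ : ℕ => c) =o[atTop] B := fun c =>
    isLittleO_const_left.2 (.inr (tendsto_norm_atTop_atTop.comp hB))
  have hmain : (fun n => A n - l * B n) =o[atTop] B := by
    have := (hsum.trans_isBigO ((isBigO_refl B _).sub (hconst (B 0)).isBigO)).add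
      (hconst (A 0 - l * B 0))
    exact this.congr_left fun n => by ring
  refine (add_zero l ▸ tendsto_const_nhds.add hmain.tendsto_div_nhds_zero).congr' ?_
  filter_upwards [hB.eventually_gt_atTop 0] with n hn
  field_simp
  ring

theorem tendsto_div_of_tendsto_sub_div_sub {A B : ℕ → ℝ} {l : ℝ}
    (hBm : ∀ᶠ n in atTop, B n < B (n + 1)) (hB : Tendsto B atTop atTop)
    (h : Tendsto (fun n => (A (n + 1) - A n) / (B (n + 1) - B n)) atTop (𝓝 l)) :
    Tendsto (fun n => A n / B n) atTop (𝓝 l) := by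
  obtain ⟨N, hN⟩ := eventually_atTop.1 hBm
  rw [← tendsto_add_atTop_iff_nat N]
  refine StrictMono.tendsto_div_of_tendsto_sub_div_sub
    (strictMono_nat_of_lt_succ fun n => ?_) ((tendsto_add_atTop_iff_nat N).2 hB) ?_
  · simpa only [add_right_comm] using hN (n + N) (by omega)
  · simpa only [add_right_comm] using (tendsto_add_atTop_iff_nat N).2 h

section InverseProduct

variable {β P : ℕ → ℝ}

theorem mul_sq_succ_sub_mul_sq {n : ℕ} (hP : P n = P (n + 1) * (1 - β (n + 1)))
    (h₀ : β n ≠ 0) (h₁ : β (n + 1) ≠ 0) :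
    β (n + 1) * P (n + 1) ^ 2 - β n * P n ^ 2 =
      β n * β (n + 1) * P (n + 1) ^ 2 * (2 - β (n + 1) - ((β (n + 1))⁻¹ - (β n)⁻¹)) := by
  rw [hP]
  field_simp
  ring

theorem tendsto_sum_sq_mul_sq_div_mul_sq (hP : ∀ n, P n = P (n + 1) * (1 - β (n + 1)))
    (hw : Tendsto (fun n => β n * P n ^ 2) atTop atTop) (hβ : Tendsto β atTop (𝓝 0))
    (hδ : Tendsto (fun n => (β (n + 1))⁻¹ - (β n)⁻¹) atTop (𝓝 0)) :
    Tendsto (fun n => (∑ k ∈ Icc 1 n, β k ^ 2 * P k ^ 2) / (β n * P n ^ 2)) atTop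
      (𝓝 (1 / 2)) := by
  set δ := fun n => (β (n + 1))⁻¹ - (β n)⁻¹
  set τ := fun n => 2 - β (n + 1) - δ n
  have hβ' : Tendsto (fun n => β (n + 1)) atTop (𝓝 0) := hβ.comp (tendsto_add_atTop_nat 1)
  have hτ : Tendsto τ atTop (𝓝 2) := by
    simpa using (tendsto_const_nhds.sub hβ').sub hδ
  have hpos : ∀ᶠ n in atTop, 0 < β n ∧ P n ≠ 0 := by
    filter_upwards [hw.eventually_gt_atTop 0] with n hn
    refine ⟨pos_of_mul_pos_left hn (sq_nonneg _), fun h => by simp [h] at hn⟩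
  have hgood : ∀ᶠ n in atTop, 0 < β n ∧ 0 < β (n + 1) ∧ P (n + 1) ≠ 0 ∧ 0 < τ n := by
    filter_upwards [hpos, tendsto_add_atTop_nat 1 |>.eventually hpos,
      hτ.eventually_const_lt two_pos] with n h₀ h₁ hτn
    exact ⟨h₀.1, h₁.1, h₁.2, hτn⟩
  refine tendsto_div_of_tendsto_sub_div_sub ?_ hw ?_
  · filter_upwards [hgood] with n ⟨h₀, h₁, hP₁, hτn⟩
    rw [← sub_pos, mul_sq_succ_sub_mul_sq (hP n) h₀.ne' h₁.ne']
    positivity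
  · -- The ratio of increments is `(β (n + 1) / β n) / τ n`, and `β (n + 1) / β n = 1 - β (n + 1) * δ n`.
    have hlim : Tendsto (fun n => (1 - β (n + 1) * δ n) / τ n) atTop (𝓝 (1 / 2)) := by
      have := (tendsto_const_nhds (x := (1 : ℝ)) |>.sub (hβ'.mul hδ)).div hτ two_ne_zero
      rwa [mul_zero, sub_zero] at this
    refine hlim.congr' ?_
    filter_upwards [hgood] with n ⟨h₀, h₁, hP₁, hτn⟩
    rw [sum_Icc_succ_top (by omega), add_sub_cancel_left,
      mul_sq_succ_sub_mul_sq (hP n) h₀.ne' h₁.ne']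
    change _ = _ / (_ * τ n)
    generalize τ n = t at hτn ⊢
    simp only [δ]
    field_simp
    ring

end InverseProduct

theorem prod_Icc_inv_one_sub_eq_mul_succ {β : ℕ → ℝ} (n : ℕ) (h : β (n + 1) ≠ 1) :
    ∏ k ∈ Icc 1 n, (1 - β k)⁻¹ = (∏ k ∈ Icc 1 (n + 1), (1 - β k)⁻¹) * (1 - β (n + 1)) := by
  rw [prod_Icc_succ_top (by omega), mul_assoc, inv_mul_cancel₀ (sub_ne_zero.2 h.symm), mul_one]

theorem Real.exp_sum_le_prod_inv_one_sub {ι : Type*} {s : Finset ι} {f : ι → ℝ}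
    (h₀ : ∀ i ∈ s, 0 ≤ f i) (h₁ : ∀ i ∈ s, f i < 1) :
    exp (∑ i ∈ s, f i) ≤ ∏ i ∈ s, (1 - f i)⁻¹ := by
  rw [exp_sum]
  exact prod_le_prod (fun i _ => (exp_pos _).le) fun i hi => by
    simpa only [one_div] using exp_bound_div_one_sub_of_interval (h₀ i hi) (h₁ i hi)

theorem tendsto_add_one_rpow_sub_rpow {p : ℝ} (hp₀ : 0 ≤ p) (hp₁ : p < 1) :
    Tendsto (fun x : ℝ => (x + 1) ^ p - x ^ p) atTop (𝓝 0) := by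
  have hupper : Tendsto (fun x : ℝ => p * x ^ (p - 1)) atTop (𝓝 0) := by
    simpa [neg_sub] using (tendsto_rpow_neg_atTop (sub_pos.2 hp₁)).const_mul p
  refine tendsto_of_tendsto_of_tendsto_of_le_of_le' tendsto_const_nhds hupper ?_ ?_
  · filter_upwards [eventually_ge_atTop 0] with x hx
    exact sub_nonneg.2 (rpow_le_rpow hx (by linarith) hp₀)
  · filter_upwards [eventually_gt_atTop 0] with x hx
    have hbern : (1 + x⁻¹) ^ p ≤ 1 + p * x⁻¹ :=
      rpow_one_add_le_one_add_mul_self (by linarith [inv_pos.2 hx]) hp₀ hp₁.le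
    calc (x + 1) ^ p - x ^ p = x ^ p * ((1 + x⁻¹) ^ p - 1) := by
          rw [mul_sub, ← mul_rpow hx.le (by positivity), mul_add, mul_inv_cancel₀ hx.ne']
          ring_nf
      _ ≤ x ^ p * (p * x⁻¹) := by gcongr; linarith
      _ = p * x ^ (p - 1) := by rw [rpow_sub_one hx.ne']; ring

theorem tendsto_inv_div_rpow_succ_sub_inv {c p : ℝ} (hp₀ : 0 ≤ p) (hp₁ : p < 1) :
    Tendsto (fun n : ℕ => (c / ((n + 1 : ℕ) : ℝ) ^ p)⁻¹ - (c / (n : ℝ) ^ p)⁻¹) atTop (𝓝 0) := by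
  refine (zero_div c ▸ ((tendsto_add_one_rpow_sub_rpow hp₀ hp₁).comp
    tendsto_natCast_atTop_atTop).div_const c).congr fun n => ?_
  rw [inv_div, inv_div, Function.comp_apply, sub_div, Nat.cast_succ]

theorem tendsto_exp_mul_rpow_one_sub_div_rpow_atTop {c p : ℝ} (hc : 0 < c) (hp : p < 1) :
    Tendsto (fun x : ℝ => exp (c * x ^ (1 - p)) / x ^ p) atTop atTop := by
  have hq : 0 < 1 - p := sub_pos.2 hp
  refine ((tendsto_exp_mul_div_rpow_atTop (p / (1 - p)) c hc).comp
    (tendsto_rpow_atTop hq)).congr' ?_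
  filter_upwards [eventually_ge_atTop 0] with x hx
  simp only [Function.comp_apply]
  rw [← rpow_mul hx, mul_div_cancel₀ _ hq.ne']

theorem div_natCast_rpow_mem_Ioo {c p : ℝ} (hc : c ∈ Set.Ioo 0 1) (hp : 0 ≤ p) {k : ℕ}
    (hk : 1 ≤ k) : c / (k : ℝ) ^ p ∈ Set.Ioo 0 1 := by
  have hk' : (1 : ℝ) ≤ k := by exact_mod_cast hk
  have hkp : 1 ≤ (k : ℝ) ^ p := one_le_rpow hk' hp
  exact ⟨div_pos hc.1 (by linarith), (div_le_self hc.1.le hkp).trans_lt hc.2⟩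

theorem mul_rpow_one_sub_le_sum_div_rpow {c p : ℝ} (hc : 0 ≤ c) (hp : 0 ≤ p) {n : ℕ}
    (hn : 1 ≤ n) : c * (n : ℝ) ^ (1 - p) ≤ ∑ k ∈ Icc 1 n, c / (k : ℝ) ^ p := by
  have hn' : (0 : ℝ) < n := by exact_mod_cast hn
  calc c * (n : ℝ) ^ (1 - p) = ∑ _k ∈ Icc 1 n, c / (n : ℝ) ^ p := by
        rw [sum_const, Nat.card_Icc, Nat.add_sub_cancel, nsmul_eq_mul, rpow_sub hn', rpow_one]
        ring
    _ ≤ ∑ k ∈ Icc 1 n, c / (k : ℝ) ^ p := sum_le_sum fun k hk => by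
        have hk := mem_Icc.1 hk
        have hk₀ : (0 : ℝ) < k := by exact_mod_cast hk.1
        gcongr
        exact_mod_cast hk.2

theorem tendsto_div_rpow_mul_sq_prod_inv_one_sub_atTop {c p : ℝ} (hc : c ∈ Set.Ioo 0 1)
    (hp₀ : 0 ≤ p) (hp₁ : p < 1) :
    Tendsto (fun n : ℕ => c / (n : ℝ) ^ p * (∏ k ∈ Icc 1 n, (1 - c / (k : ℝ) ^ p)⁻¹) ^ 2)
      atTop atTop := by
  have hc₀ : 0 < c := hc.1
  refine tendsto_atTop_mono' _ ?_ (((tendsto_exp_mul_rpow_one_sub_div_rpow_atTop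
    (mul_pos two_pos hc₀) hp₁).const_mul_atTop hc₀).comp tendsto_natCast_atTop_atTop)
  filter_upwards [eventually_ge_atTop 1] with n hn
  have hprod : exp (c * (n : ℝ) ^ (1 - p)) ≤ ∏ k ∈ Icc 1 n, (1 - c / (k : ℝ) ^ p)⁻¹ :=
    (exp_le_exp.2 (mul_rpow_one_sub_le_sum_div_rpow hc₀.le hp₀ hn)).trans <|
      exp_sum_le_prod_inv_one_sub
        (fun k hk => (div_natCast_rpow_mem_Ioo hc hp₀ (mem_Icc.1 hk).1).1.le)
        (fun k hk => (div_natCast_rpow_mem_Ioo hc hp₀ (mem_Icc.1 hk).1).2)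
  calc c * (exp (2 * c * (n : ℝ) ^ (1 - p)) / (n : ℝ) ^ p)
      = c / (n : ℝ) ^ p * exp (c * (n : ℝ) ^ (1 - p)) ^ 2 := by
        rw [← exp_nat_mul]; push_cast; ring_nf
    _ ≤ _ := by gcongr

theorem stmt_19 (b₁ b : ℝ) (hb₁ : 0 < b₁) (hb₁' : b₁ < 1)
    (hb : 1 / 2 < b) (hb' : b < 1)
    (bn : ℕ → ℝ) (hbn : ∀ n : ℕ, 1 ≤ n → bn n = b₁ / (n : ℝ) ^ b)
    (P : ℕ → ℝ) (hP : ∀ n, P n = ∏ k ∈ Finset.Icc 1 n, (1 - bn k)⁻¹) :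
    Tendsto (fun n : ℕ =>
      (1 / (bn n * (P n) ^ 2)) * ∑ k ∈ Finset.Icc 1 n, (bn k) ^ 2 * (P k) ^ 2)
      atTop (nhds (1 / 2)) := by
  have hb₀ : 0 < b := by linarith
  have hb₁I : b₁ ∈ Set.Ioo 0 1 := ⟨hb₁, hb₁'⟩
  have hPsucc : ∀ n, P n = P (n + 1) * (1 - bn (n + 1)) := fun n => by
    have hlt : bn (n + 1) < 1 :=
      hbn (n + 1) (by omega) ▸ (div_natCast_rpow_mem_Ioo hb₁I hb₀.le (by omega)).2
    rw [hP, hP]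
    exact prod_Icc_inv_one_sub_eq_mul_succ n hlt.ne
  have hw : Tendsto (fun n => bn n * P n ^ 2) atTop atTop := by
    refine (tendsto_div_rpow_mul_sq_prod_inv_one_sub_atTop hb₁I hb₀.le hb').congr' ?_
    filter_upwards [eventually_ge_atTop 1] with n hn
    rw [hbn n hn, hP]
    congr 2
    exact prod_congr rfl fun k hk => by rw [hbn k (mem_Icc.1 hk).1]
  have hβ : Tendsto bn atTop (𝓝 0) := by
    refine ((tendsto_const_nhds (x := b₁)).div_atTop
      ((tendsto_rpow_atTop hb₀).comp tendsto_natCast_atTop_atTop)).congr' ?_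
    filter_upwards [eventually_ge_atTop 1] with n hn
    exact (hbn n hn).symm
  have hδ : Tendsto (fun n => (bn (n + 1))⁻¹ - (bn n)⁻¹) atTop (𝓝 0) := by
    refine (tendsto_inv_div_rpow_succ_sub_inv (c := b₁) hb₀.le hb').congr' ?_
    filter_upwards [eventually_ge_atTop 1] with n hn
    rw [hbn n hn, hbn (n + 1) (by omega)]
  simpa only [one_div_mul_eq_div] using tendsto_sum_sq_mul_sq_div_mul_sq hPsucc hw hβ hδ
end
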